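/- Suppose the primal BwK LP has a unique, nondegenerate optimal solution x* (|I*| = |J*|), and define the sub-optimality gap δ = (1/T)·(OPT_LP − max{ max_{i ∈ I*} OPT_i, max_{j ∈ J'} OPT_j }), which is strictly positive. Suppose estimators μ^L, μ^U, C^L, C^U satisfy, for some ε with ε ≤ b and 3(2 + 1/b)ε < δ/2: μ − ε𝟙 ≤ μ^L ≤ μ ≤ μ^U ≤ μ + ε𝟙 and C − ε𝟙𝟙ᵀ ≤ C^L ≤ C ≤ C^U ≤ C + ε𝟙𝟙ᵀ entrywise, with the first rows of C^L, C, C^U all equal to b𝟙ᵀ. Let OPT^L = max (μ^L)ᵀx s.t. C^U x ≤ B, x ≥ 0; for i ∈ [m] let OPT_i^U = max (μ^U)ᵀx s.t. C^L x ≤ B, x_i = 0, x ≥ 0; and for j ∈ [d] let OPT_j^U = min Bᵀy − Tb s.t. (C^L)ᵀy ≥ μ^U + (C^U_{j,·})ᵀ, y ≥ 0. Then OPT^L > OPT_i^U for every optimal arm i ∈ I*, and OPT^L > OPT_j^U for every non-binding resource j ∈ J'; while OPT^L ≤ OPT_i^U for every i ∈ I' and OPT^L ≤ OPT_j^U for every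 j ∈ J*. -/

import Mathlib

/-!
Every point feasible for one of these LPs has total mass `∑ xᵢ ≤ T`, because the first
constraint row is constantly `b`. Hence `ε`-errors in the data move every LP value by
`O((1 + 1/b) ε T)`: a primal solution for one consumption matrix stays feasible for an
entrywise `ε`-larger one after scaling by `b / (b + ε)`, and a dual solution is repaired by
raising the multiplier of the time row. So `OPT^L ≥ OPT_LP − (1 + 1/b) ε T`, and `OPTᵢ^U`, `OPTⱼ^U`
exceed `OPTᵢ`, `OPTⱼ` by at most `(3 + 1/b) ε T`; the gap `δT` separates them. Conversely, for
`i ∈ I'` the point `x*` itself is feasible for `OPTᵢ^U`, and for `j ∈ J*` weak duality against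
the binding row `j` gives `OPTⱼ^U ≥ OPT_LP ≥ OPT^L`.
-/

open Matrix Finset

section

variable {ι κ : Type*}

lemma const_dotProduct [Fintype ι] (a : ℝ) (v : ι → ℝ) :
    (fun _ => a) ⬝ᵥ v = a * ∑ i, v i := by
  simp only [dotProduct, Finset.mul_sum]

lemma mulVec_apply_of_row_eq_const [Fintype ι] {M : Matrix κ ι ℝ} {j₀ : κ} {b : ℝ}
    (hrow : ∀ i, M j₀ i = b) (x : ι → ℝ) : (M *ᵥ x) j₀ = b * ∑ i, x i := by
  rw [← const_dotProduct]
  exact congrArg (· ⬝ᵥ x) (funext hrow)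

lemma sum_le_of_mulVec_apply_le [Fintype ι] {M : Matrix κ ι ℝ} {x : ι → ℝ} {j₀ : κ} {b T : ℝ}
    (hb : 0 < b) (hrow : ∀ i, M j₀ i = b) (hMx : (M *ᵥ x) j₀ ≤ T * b) : ∑ i, x i ≤ T := by
  rw [mulVec_apply_of_row_eq_const hrow] at hMx
  nlinarith

lemma mulVec_apply_le_of_le [Fintype ι] {M M' : Matrix κ ι ℝ} {x : ι → ℝ}
    (hM : ∀ j i, M j i ≤ M' j i) (hx : 0 ≤ x) (j : κ) : (M *ᵥ x) j ≤ (M' *ᵥ x) j :=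
  dotProduct_le_dotProduct_of_nonneg_right (hM j) hx

lemma dotProduct_le_sum_of_le_one [Fintype ι] {ν x : ι → ℝ} (hx : 0 ≤ x) (hν : ν ≤ 1) :
    ν ⬝ᵥ x ≤ ∑ i, x i := by
  simpa [one_dotProduct] using dotProduct_le_dotProduct_of_nonneg_right hν hx

lemma dotProduct_le_add_mul_sum [Fintype ι] {a c x : ι → ℝ} {ε : ℝ} (hx : 0 ≤ x)
    (h : ∀ i, a i ≤ c i + ε) : a ⬝ᵥ x ≤ c ⬝ᵥ x + ε * ∑ i, x i := by
  rw [dotProduct, dotProduct, Finset.mul_sum, ← Finset.sum_add_distrib]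
  gcongr with i
  exact (mul_le_mul_of_nonneg_right (h i) (hx i)).trans_eq (add_mul _ _ _)

lemma mulVec_smul_apply_le_of_le_add [Fintype ι] {M M' : Matrix κ ι ℝ} {x : ι → ℝ}
    {b ε T : ℝ} (hb : 0 < b) (hε : 0 ≤ ε) (hx : 0 ≤ x) (hsum : ∑ i, x i ≤ T)
    (hM : ∀ j i, M j i ≤ M' j i + ε) (hM'x : ∀ j, (M' *ᵥ x) j ≤ T * b) (j : κ) :
    (M *ᵥ ((b / (b + ε)) • x)) j ≤ T * b := by
  have hMx : (M *ᵥ x) j ≤ T * (b + ε) := by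
    have hperturb : (M *ᵥ x) j ≤ (M' *ᵥ x) j + ε * ∑ i, x i :=
      dotProduct_le_add_mul_sum hx (hM j)
    nlinarith [hM'x j, mul_le_mul_of_nonneg_left hsum hε]
  rw [mulVec_smul]
  calc b / (b + ε) * (M *ᵥ x) j ≤ b / (b + ε) * (T * (b + ε)) := by gcongr
    _ = T * b := by field_simp

lemma sub_div_mul_le_div_add_mul {b ε T v : ℝ} (hb : 0 < b) (hε : 0 ≤ ε) (hT : 0 ≤ T)
    (hv : v ≤ T) : v - ε / b * T ≤ b / (b + ε) * v := by
  have hshrink : b / (b + ε) * v = v - ε / (b + ε) * v := by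
    field_simp
    ring
  have hεv : ε / (b + ε) * v ≤ ε / (b + ε) * T := by gcongr
  have hεb : ε / (b + ε) * T ≤ ε / b * T := by
    gcongr
    linarith
  linarith

theorem exists_feasible_of_perturbed [Fintype ι] {M M' : Matrix κ ι ℝ} {ν ν' x : ι → ℝ}
    {j₀ : κ} {b ε T : ℝ} (hb : 0 < b) (hε : 0 ≤ ε) (hT : 0 ≤ T) (hrow : ∀ i, M' j₀ i = b)
    (hM : ∀ j i, M j i ≤ M' j i + ε) (hν : ∀ i, ν' i ≤ ν i + ε) (hν1 : ν ≤ 1)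
    (hx : 0 ≤ x) (hM'x : ∀ j, (M' *ᵥ x) j ≤ T * b) :
    ∃ x', 0 ≤ x' ∧ (∀ j, (M *ᵥ x') j ≤ T * b) ∧ (∀ i, x i = 0 → x' i = 0) ∧
      ν' ⬝ᵥ x - (1 + 1 / b) * ε * T ≤ ν ⬝ᵥ x' := by
  have hsum := sum_le_of_mulVec_apply_le hb hrow (hM'x j₀)
  refine ⟨(b / (b + ε)) • x, smul_nonneg (by positivity) hx,
    mulVec_smul_apply_le_of_le_add hb hε hx hsum hM hM'x, fun i hi => by simp [hi], ?_⟩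
  have hν'x := dotProduct_le_add_mul_sum hx hν
  have hνx := sub_div_mul_le_div_add_mul hb hε hT
    ((dotProduct_le_sum_of_le_one hx hν1).trans hsum)
  have hεsum := mul_le_mul_of_nonneg_left hsum hε
  have hsplit : (1 + 1 / b) * ε * T = ε * T + ε / b * T := by ring
  rw [dotProduct_smul, smul_eq_mul]
  linarith

lemma le_one_add_one_div_of_mul_sub_le {b T s : ℝ} (hb : 0 < b) (hT : 0 < T)
    (h : T * b * s - T * b ≤ T) : s ≤ 1 + 1 / b := by
  rw [one_add_div hb.ne', le_div_iff₀ hb]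
  exact le_of_mul_le_mul_left (by linarith) hT

theorem exists_dual_feasible_of_perturbed [Fintype κ] [DecidableEq κ] {M M' : Matrix κ ι ℝ}
    {c c' : ι → ℝ} {y : κ → ℝ} {j₀ : κ} {b ε : ℝ} (hb : 0 < b) (hε : 0 ≤ ε)
    (hrow : ∀ i, M' j₀ i = b) (hM : ∀ j i, M j i ≤ M' j i + ε)
    (hc : ∀ i, c' i ≤ c i + 2 * ε) (hy : 0 ≤ y) (hcy : c ≤ Mᵀ *ᵥ y)
    (hsum : ∑ j, y j ≤ 1 + 1 / b) :
    ∃ y', 0 ≤ y' ∧ c' ≤ M'ᵀ *ᵥ y' ∧ b * ∑ j, y' j ≤ b * ∑ j, y j + (3 + 1 / b) * ε := by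
  set α := (2 + ∑ j, y j) * ε / b
  have hα : 0 ≤ α := by
    have : 0 ≤ ∑ j, y j := Finset.sum_nonneg fun j _ => hy j
    positivity
  have hbα : b * α = (2 + ∑ j, y j) * ε := by
    simp only [α]
    field_simp
  refine ⟨y + Pi.single j₀ α, add_nonneg hy (Pi.single_nonneg.2 hα), fun i => ?_, ?_⟩
  · have hperturb : (Mᵀ *ᵥ y) i ≤ (M'ᵀ *ᵥ y) i + ε * ∑ j, y j :=
      dotProduct_le_add_mul_sum hy fun j => hM j i
    have hshift : (M'ᵀ *ᵥ Pi.single j₀ α) i = b * α := by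
      simp [mulVec_single, hrow]
    rw [mulVec_add, Pi.add_apply, hshift, hbα]
    linarith [hc i, hcy i]
  · simp only [Pi.add_apply, Finset.sum_add_distrib, Finset.sum_pi_single', Finset.mem_univ,
      if_true, mul_add, hbα]
    linarith [mul_le_mul_of_nonneg_right hsum hε]

theorem dotProduct_le_dotProduct_of_dual_feasible [Fintype ι] [Fintype κ] {M : Matrix κ ι ℝ}
    {c x : ι → ℝ} {y B : κ → ℝ} (hx : 0 ≤ x) (hy : 0 ≤ y) (hMx : M *ᵥ x ≤ B)
    (hc : c ≤ Mᵀ *ᵥ y) : c ⬝ᵥ x ≤ B ⬝ᵥ y :=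
  calc c ⬝ᵥ x ≤ (Mᵀ *ᵥ y) ⬝ᵥ x := dotProduct_le_dotProduct_of_nonneg_right hc hx
    _ = y ⬝ᵥ (M *ᵥ x) := by rw [mulVec_transpose, dotProduct_mulVec]
    _ ≤ y ⬝ᵥ B := dotProduct_le_dotProduct_of_nonneg_left hMx hy
    _ = B ⬝ᵥ y := dotProduct_comm y B

end

theorem stmt16_general (m d : ℕ) (hd : 0 < d)
    (μ μL μU : Fin m → ℝ) (C CL CU : Matrix (Fin d) (Fin m) ℝ)
    (ε δ b T : ℝ) (hb : 0 < b) (hT : 0 < T)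
    (hμ : ∀ i, μ i ∈ Set.Icc (0 : ℝ) 1)
    (hrow : ∀ i, C ⟨0, hd⟩ i = b)
    (hrowL : ∀ i, CL ⟨0, hd⟩ i = b)
    (B : Fin d → ℝ) (hB : B = fun _ => T * b)
    (OPTLP : ℝ) (xstar : Fin m → ℝ)
    -- x* is optimal for the primal LP with value OPT_LP
    (hxfeas : (∀ i, 0 ≤ xstar i) ∧ (∀ j, C.mulVec xstar j ≤ B j))
    (hxval : μ ⬝ᵥ xstar = OPTLP)
    (hOPT : IsGreatest {r : ℝ | ∃ x : Fin m → ℝ,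
      (∀ i, 0 ≤ x i) ∧ (∀ j, C.mulVec x j ≤ B j) ∧ r = μ ⬝ᵥ x} OPTLP)
    -- the values OPT_i  (primal LP with the extra constraint x_i = 0)
    (vI : Fin m → ℝ)
    (hvI : ∀ i, IsGreatest {r : ℝ | ∃ x : Fin m → ℝ,
      (∀ i', 0 ≤ x i') ∧ (∀ j, C.mulVec x j ≤ B j) ∧ x i = 0 ∧ r = μ ⬝ᵥ x} (vI i))
    -- the values OPT_j  (min Bᵀy − Tb s.t. Cᵀy ≥ μ + C_{j,·}ᵀ, y ≥ 0)
    (vJ : Fin d → ℝ)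
    (hvJ : ∀ j, IsLeast {r : ℝ | ∃ y : Fin d → ℝ,
      (∀ j', 0 ≤ y j') ∧ (∀ i, μ i + C j i ≤ Cᵀ.mulVec y i) ∧
      r = B ⬝ᵥ y - T * b} (vJ j))
    -- δ = (OPT_LP − max{max_{i ∈ I*} OPT_i, max_{j ∈ J'} OPT_j})/T, strictly positive
    (hδ : IsLUB ({r : ℝ | ∃ i, 0 < xstar i ∧ r = vI i} ∪
                 {r : ℝ | ∃ j, C.mulVec xstar j < T * b ∧ r = vJ j})
        (OPTLP - δ * T))
    -- accuracy of the estimators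
    (hε0 : 0 ≤ ε) (hεδ : 3 * (2 + 1 / b) * ε < δ / 2)
    (hμLU : ∀ i, μ i - ε ≤ μL i ∧ μL i ≤ μ i ∧ μ i ≤ μU i ∧ μU i ≤ μ i + ε)
    (hCLU : ∀ j i, C j i - ε ≤ CL j i ∧ CL j i ≤ C j i ∧
      C j i ≤ CU j i ∧ CU j i ≤ C j i + ε)
    -- the estimated LP values
    (OPTL : ℝ)
    (hOPTL : IsGreatest {r : ℝ | ∃ x : Fin m → ℝ,
      (∀ i, 0 ≤ x i) ∧ (∀ j, CU.mulVec x j ≤ B j) ∧ r = μL ⬝ᵥ x} OPTL)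
    (OPTiU : Fin m → ℝ)
    (hOPTiU : ∀ i, IsGreatest {r : ℝ | ∃ x : Fin m → ℝ,
      (∀ i', 0 ≤ x i') ∧ (∀ j, CL.mulVec x j ≤ B j) ∧ x i = 0 ∧ r = μU ⬝ᵥ x} (OPTiU i))
    (OPTjU : Fin d → ℝ)
    (hOPTjU : ∀ j, IsLeast {r : ℝ | ∃ y : Fin d → ℝ,
      (∀ j', 0 ≤ y j') ∧ (∀ i, μU i + CU j i ≤ CLᵀ.mulVec y i) ∧
      r = B ⬝ᵥ y - T * b} (OPTjU j)) :
    (∀ i, 0 < xstar i → OPTiU i < OPTL) ∧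
    (∀ j, C.mulVec xstar j < T * b → OPTjU j < OPTL) ∧
    (∀ i, xstar i = 0 → OPTL ≤ OPTiU i) ∧
    (∀ j, C.mulVec xstar j = T * b → OPTL ≤ OPTjU j) := by
  subst hB
  obtain ⟨hx0, hxC⟩ := hxfeas
  have hμ1 : μ ≤ 1 := fun i => (hμ i).2
  have hεT : 0 ≤ ε * T := mul_nonneg hε0 hT.le
  have hxCL j : (CL *ᵥ xstar) j ≤ T * b :=
    (mulVec_apply_le_of_le (fun j i => (hCLU j i).2.1) hx0 j).trans (hxC j)
  have hOPTLP_le : OPTLP ≤ T := hxval ▸ (dotProduct_le_sum_of_le_one hx0 hμ1).trans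
    (sum_le_of_mulVec_apply_le hb hrow (hxC ⟨0, hd⟩))
  have hOPTL_le : OPTL ≤ OPTLP := by
    obtain ⟨x, hx0, hxCU, hOPTL_eq⟩ := hOPTL.1
    exact hOPTL_eq ▸ (dotProduct_le_dotProduct_of_nonneg_right (fun i => (hμLU i).2.1) hx0).trans
      (hOPT.2 ⟨x, hx0, fun j => (mulVec_apply_le_of_le (fun j i => (hCLU j i).2.2.1) hx0 j).trans
        (hxCU j), rfl⟩)
  have hOPTL_ge : OPTLP - (1 + 1 / b) * ε * T ≤ OPTL := by
    obtain ⟨x', hx'0, hx'CU, -, hval⟩ := exists_feasible_of_perturbed (ν' := μ) hb hε0 hT.le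
      hrow (fun j i => (hCLU j i).2.2.2) (fun i => by linarith [(hμLU i).1])
      (fun i => (hμLU i).2.1.trans (hμ1 i)) hx0 hxC
    exact hxval ▸ hval.trans (hOPTL.2 ⟨x', hx'0, hx'CU, rfl⟩)
  have hgap : 2 * (2 + 1 / b) * ε * T < δ * T := by
    have : 0 ≤ (2 + 1 / b) * ε := by positivity
    gcongr
    linarith
  refine ⟨fun i hi => ?_, fun j hj => ?_, fun i hi => ?_, fun j hj => ?_⟩
  · obtain ⟨x, hx0, hxCL, hxi, hOPTiU_eq⟩ := (hOPTiU i).1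
    obtain ⟨x', hx'0, hx'C, hx'i, hval⟩ := exists_feasible_of_perturbed (M := C) hb hε0 hT.le
      hrowL (fun j i => by linarith [(hCLU j i).1]) (fun i => (hμLU i).2.2.2) hμ1 hx0 hxCL
    have hvI_le := hδ.1 (Or.inl ⟨i, hi, rfl⟩)
    have hvI_ge := (hvI i).2 ⟨x', hx'0, hx'C, hx'i i hxi, rfl⟩
    linarith
  · obtain ⟨y, hy0, hyC, hvJ_eq⟩ := (hvJ j).1
    have hvJ_le := hδ.1 (Or.inr ⟨j, hj, rfl⟩)
    rw [const_dotProduct] at hvJ_eq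
    have hδT : 0 < δ * T := (by positivity : 0 ≤ 2 * (2 + 1 / b) * ε * T).trans_lt hgap
    have hsum := le_one_add_one_div_of_mul_sub_le hb hT (s := ∑ j, y j) (by linarith)
    obtain ⟨y', hy'0, hy'CL, hy'sum⟩ := exists_dual_feasible_of_perturbed (M := C)
      (c' := fun i => μU i + CU j i) hb hε0 hrowL (fun j i => by linarith [(hCLU j i).1])
      (fun i => by linarith [(hμLU i).2.2.2, (hCLU j i).2.2.2]) hy0 hyC hsum
    have hOPTjU_le := (hOPTjU j).2 ⟨y', hy'0, hy'CL, rfl⟩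
    rw [const_dotProduct] at hOPTjU_le
    linarith [mul_le_mul_of_nonneg_left hy'sum hT.le]
  · exact hxval ▸ hOPTL_le.trans <|
      (dotProduct_le_dotProduct_of_nonneg_right (fun i => (hμLU i).2.2.1) hx0).trans
      ((hOPTiU i).2 ⟨xstar, hx0, hxCL, hi, rfl⟩)
  · obtain ⟨y, hy0, hyCL, hOPTjU_eq⟩ := (hOPTjU j).1
    have hbinding : (μ + C j) ⬝ᵥ xstar = OPTLP + T * b := by
      rw [add_dotProduct, hxval, ← hj]
      rfl
    have hobj : (μ + C j) ⬝ᵥ xstar ≤ (fun i => μU i + CU j i) ⬝ᵥ xstar :=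
      dotProduct_le_dotProduct_of_nonneg_right
        (fun i => add_le_add (hμLU i).2.2.1 (hCLU j i).2.2.1) hx0
    linarith [dotProduct_le_dotProduct_of_dual_feasible hx0 hy0 hxCL hyCL]

/-- Phase-I identification guarantee. Suppose the primal BwK LP has a unique
nondegenerate optimal solution `x*`, and let
`δ = (OPT_LP − max{max_{i ∈ I*} OPTᵢ, max_{j ∈ J'} OPTⱼ})/T > 0` (encoded below by
`IsLUB … (OPT_LP − δT)`). If the estimators are `ε`-accurate with `ε ≤ b` and
`3(2 + 1/b)ε < δ/2`, then `OPT^L > OPTᵢ^U` for every `i ∈ I*` and `OPT^L > OPTⱼ^U` for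
every `j ∈ J'`, while `OPT^L ≤ OPTᵢ^U` for every `i ∈ I'` and `OPT^L ≤ OPTⱼ^U` for every
`j ∈ J*`. -/
theorem stmt16 (m d : ℕ) (hm : 0 < m) (hd : 0 < d)
    (μ μL μU : Fin m → ℝ) (C CL CU : Matrix (Fin d) (Fin m) ℝ)
    (ε δ b T : ℝ) (hb : 0 < b) (hb1 : b ≤ 1) (hT : 0 < T)
    (hμ : ∀ i, μ i ∈ Set.Icc (0 : ℝ) 1)
    (hC : ∀ j i, C j i ∈ Set.Icc (0 : ℝ) 1)
    (hrow : ∀ i, C ⟨0, hd⟩ i = b)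
    (hrowL : ∀ i, CL ⟨0, hd⟩ i = b) (hrowU : ∀ i, CU ⟨0, hd⟩ i = b)
    (B : Fin d → ℝ) (hB : B = fun _ => T * b)
    (OPTLP : ℝ) (xstar : Fin m → ℝ)
    -- x* is optimal for the primal LP with value OPT_LP
    (hxfeas : (∀ i, 0 ≤ xstar i) ∧ (∀ j, C.mulVec xstar j ≤ B j))
    (hxval : μ ⬝ᵥ xstar = OPTLP)
    (hOPT : IsGreatest {r : ℝ | ∃ x : Fin m → ℝ,
      (∀ i, 0 ≤ x i) ∧ (∀ j, C.mulVec x j ≤ B j) ∧ r = μ ⬝ᵥ x} OPTLP)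
    -- x* is the unique optimal solution
    (huniq : ∀ x' : Fin m → ℝ, (∀ i, 0 ≤ x' i) → (∀ j, C.mulVec x' j ≤ B j) →
      μ ⬝ᵥ x' = OPTLP → x' = xstar)
    -- nondegeneracy: |I*| = |J*|
    (hnondeg : (univ.filter fun i => 0 < xstar i).card
        = (univ.filter fun j => C.mulVec xstar j = T * b).card)
    -- the values OPT_i  (primal LP with the extra constraint x_i = 0)
    (vI : Fin m → ℝ)
    (hvI : ∀ i, IsGreatest {r : ℝ | ∃ x : Fin m → ℝ,
      (∀ i', 0 ≤ x i') ∧ (∀ j, C.mulVec x j ≤ B j) ∧ x i = 0 ∧ r = μ ⬝ᵥ x} (vI i))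
    -- the values OPT_j  (min Bᵀy − Tb s.t. Cᵀy ≥ μ + C_{j,·}ᵀ, y ≥ 0)
    (vJ : Fin d → ℝ)
    (hvJ : ∀ j, IsLeast {r : ℝ | ∃ y : Fin d → ℝ,
      (∀ j', 0 ≤ y j') ∧ (∀ i, μ i + C j i ≤ Cᵀ.mulVec y i) ∧
      r = B ⬝ᵥ y - T * b} (vJ j))
    -- δ = (OPT_LP − max{max_{i ∈ I*} OPT_i, max_{j ∈ J'} OPT_j})/T, strictly positive
    (hδpos : 0 < δ)
    (hδ : IsLUB ({r : ℝ | ∃ i, 0 < xstar i ∧ r = vI i} ∪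
                 {r : ℝ | ∃ j, C.mulVec xstar j < T * b ∧ r = vJ j})
        (OPTLP - δ * T))
    -- accuracy of the estimators
    (hε0 : 0 ≤ ε) (hεb : ε ≤ b) (hεδ : 3 * (2 + 1 / b) * ε < δ / 2)
    (hμLU : ∀ i, μ i - ε ≤ μL i ∧ μL i ≤ μ i ∧ μ i ≤ μU i ∧ μU i ≤ μ i + ε)
    (hCLU : ∀ j i, C j i - ε ≤ CL j i ∧ CL j i ≤ C j i ∧
      C j i ≤ CU j i ∧ CU j i ≤ C j i + ε)
    -- the estimated LP values
    (OPTL : ℝ)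
    (hOPTL : IsGreatest {r : ℝ | ∃ x : Fin m → ℝ,
      (∀ i, 0 ≤ x i) ∧ (∀ j, CU.mulVec x j ≤ B j) ∧ r = μL ⬝ᵥ x} OPTL)
    (OPTiU : Fin m → ℝ)
    (hOPTiU : ∀ i, IsGreatest {r : ℝ | ∃ x : Fin m → ℝ,
      (∀ i', 0 ≤ x i') ∧ (∀ j, CL.mulVec x j ≤ B j) ∧ x i = 0 ∧ r = μU ⬝ᵥ x} (OPTiU i))
    (OPTjU : Fin d → ℝ)
    (hOPTjU : ∀ j, IsLeast {r : ℝ | ∃ y : Fin d → ℝ,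
      (∀ j', 0 ≤ y j') ∧ (∀ i, μU i + CU j i ≤ CLᵀ.mulVec y i) ∧
      r = B ⬝ᵥ y - T * b} (OPTjU j)) :
    (∀ i, 0 < xstar i → OPTiU i < OPTL) ∧
    (∀ j, C.mulVec xstar j < T * b → OPTjU j < OPTL) ∧
    (∀ i, xstar i = 0 → OPTL ≤ OPTiU i) ∧
    (∀ j, C.mulVec xstar j = T * b → OPTL ≤ OPTjU j) :=
  stmt16_general m d hd μ μL μU C CL CU ε δ b T hb hT hμ hrow hrowL B hB OPTLP xstar hxfeas hxval
    hOPT vI hvI vJ hvJ hδ hε0 hεδ hμLU hCLU OPTL hOPTL OPTiU hOPTiU OPTjU hOPTjU
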